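/- arXiv:1001.0158 — 3 statements merged into one kernel-verified Lean document; each statement's English description precedes it below -/
import Mathlib

section
/- Let Ē be a complete lattice satisfying the finite distributive law x ⊓ (y ⊔ z) = (x ⊓ y) ⊔ (x ⊓ z), and let E ⊆ Ē be a nonempty subset closed under the binary join and the binary meet of Ē. Let L be a poset in which every nonempty upward-directed subset has a least upper bound, and let v : E → L be maxitive. Define E_* = {a ∈ Ē | ∀ g ∈ E, g ⊓ a ∈ E} (so E ⊆ E_*). Then there exists a map v_* : E_* → L such that: (i) for every a ∈ E_*, IsLUB {v g | g ∈ E, g ≤ a} (v_* a); (ii) v_* is maxitive on E_*; (iii) v_* g = v g for every g ∈ E; and (iv) every maxitive map w : E_* → L with w g = v g for all g ∈ E satisfies v_* a ≤ w a for all a ∈ E_*. -/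
/-!
On `E_*` put `v_* a := sup {v g | g ∈ E, g ≤ a}`; the supremum exists because `v` is monotone and
`E` is join-closed, so these sets are directed. For maxitivity of `v_*` at a finite `S ⊆ E_*`, any
`g ∈ E` below `sSup S` is, by distributivity, the finite join of the `g ⊓ a` (`a ∈ S`), which lie
in `E`, so maxitivity of `v` bounds `v g` by the `v_* a`. Any maxitive extension `w` is monotone
on `E_*`, hence bounds every `v g = w g` with `g ≤ a` by `w a`, which gives minimality.
-/

/-- A map `v` is maxitive on the subset `E` of the complete lattice `Ē`. -/
def MaxitiveOn {Ebar L : Type*} [CompleteLattice Ebar] [Preorder L]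
    (E : Set Ebar) (v : Ebar → L) : Prop :=
  ∀ S : Set Ebar, S ⊆ E → S.Nonempty → S.Finite → sSup S ∈ E → IsLUB (v '' S) (v (sSup S))

section MinimalExtension

variable {Ebar L : Type*} [CompleteLattice Ebar] {E : Set Ebar}

theorem inf_sSup_eq_sSup_image_of_finite
    (hdist : ∀ x y z : Ebar, x ⊓ (y ⊔ z) = (x ⊓ y) ⊔ (x ⊓ z)) (x : Ebar) {S : Set Ebar}
    (hS : S.Finite) : x ⊓ sSup S = sSup ((x ⊓ ·) '' S) := by
  induction S, hS using Set.Finite.induction_on with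
  | empty => simp
  | insert _ _ ih => rw [Set.image_insert_eq, sSup_insert, sSup_insert, hdist, ih]

theorem MaxitiveOn.monotoneOn [Preorder L] {v : Ebar → L} (hv : MaxitiveOn E v) :
    MonotoneOn v E := by
  intro g hg a ha hga
  have h := hv {g, a} (Set.pair_subset hg ha) (Set.insert_nonempty _ _) (Set.toFinite _)
    (by rwa [sSup_pair, sup_eq_right.mpr hga])
  rw [Set.image_pair, sSup_pair, sup_eq_right.mpr hga] at h
  exact h.1 (Set.mem_insert _ _)

/-- The paper's `E_*`. -/
def infStabilizer (E : Set Ebar) : Set Ebar := {a | ∀ g ∈ E, g ⊓ a ∈ E}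

theorem subset_infStabilizer (hEmeet : ∀ g ∈ E, ∀ g' ∈ E, g ⊓ g' ∈ E) : E ⊆ infStabilizer E :=
  fun g hg g' hg' => hEmeet g' hg' g hg

def lowerValues (E : Set Ebar) (v : Ebar → L) (a : Ebar) : Set L :=
  {x | ∃ g ∈ E, g ≤ a ∧ x = v g}

variable {v : Ebar → L}

theorem lowerValues_mono {a b : Ebar} (hab : a ≤ b) : lowerValues E v a ⊆ lowerValues E v b := by
  rintro _ ⟨g, hg, hga, rfl⟩
  exact ⟨g, hg, hga.trans hab, rfl⟩

theorem lowerValues_nonempty (hE : E.Nonempty) {a : Ebar} (ha : a ∈ infStabilizer E) :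
    (lowerValues E v a).Nonempty :=
  let ⟨g, hg⟩ := hE
  ⟨v (g ⊓ a), g ⊓ a, ha g hg, inf_le_right, rfl⟩

theorem directedOn_lowerValues [Preorder L] (hEjoin : ∀ g ∈ E, ∀ g' ∈ E, g ⊔ g' ∈ E)
    (hv : MonotoneOn v E) (a : Ebar) : DirectedOn (· ≤ ·) (lowerValues E v a) := by
  rintro _ ⟨g, hg, hga, rfl⟩ _ ⟨g', hg', hg'a, rfl⟩
  have hsup := hEjoin g hg g' hg'
  exact ⟨v (g ⊔ g'), ⟨g ⊔ g', hsup, sup_le hga hg'a, rfl⟩,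
    hv hg hsup le_sup_left, hv hg' hsup le_sup_right⟩

theorem isLUB_lowerValues_self [Preorder L] (hv : MonotoneOn v E) {g : Ebar} (hg : g ∈ E) :
    IsLUB (lowerValues E v g) (v g) :=
  IsGreatest.isLUB ⟨⟨g, hg, le_rfl, rfl⟩, by rintro _ ⟨g', hg', hg'g, rfl⟩; exact hv hg' hg hg'g⟩

theorem maxitiveOn_infStabilizer_of_isLUB [Preorder L]
    (hdist : ∀ x y z : Ebar, x ⊓ (y ⊔ z) = (x ⊓ y) ⊔ (x ⊓ z)) (hv : MaxitiveOn E v)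
    {w : Ebar → L} (hlub : ∀ a ∈ infStabilizer E, IsLUB (lowerValues E v a) (w a)) :
    MaxitiveOn (infStabilizer E) w := by
  intro S hS hne hfin hsup
  refine ⟨?_, fun b hb => (hlub _ hsup).2 ?_⟩
  · rintro _ ⟨a, haS, rfl⟩
    exact (hlub a (hS haS)).mono (hlub _ hsup) (lowerValues_mono (le_sSup haS))
  · rintro _ ⟨g, hg, hgS, rfl⟩
    have hTE : (g ⊓ ·) '' S ⊆ E := by
      rintro _ ⟨a, haS, rfl⟩
      exact hS haS g hg
    have hT : sSup ((g ⊓ ·) '' S) = g := by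
      rw [← inf_sSup_eq_sSup_image_of_finite hdist g hfin, inf_eq_left.mpr hgS]
    have hvT := hv _ hTE (hne.image _) (hfin.image _) (by rwa [hT])
    rw [hT] at hvT
    refine hvT.2 ?_
    rintro _ ⟨_, ⟨a, haS, rfl⟩, rfl⟩
    exact ((hlub a (hS haS)).1 ⟨g ⊓ a, hS haS g hg, inf_le_right, rfl⟩).trans (hb ⟨a, haS, rfl⟩)

theorem mem_upperBounds_lowerValues [Preorder L] (hEmeet : ∀ g ∈ E, ∀ g' ∈ E, g ⊓ g' ∈ E)
    {w : Ebar → L} (hw : MaxitiveOn (infStabilizer E) w) (hwv : ∀ g ∈ E, w g = v g) {a : Ebar}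
    (ha : a ∈ infStabilizer E) : w a ∈ upperBounds (lowerValues E v a) := by
  rintro _ ⟨g, hg, hga, rfl⟩
  rw [← hwv g hg]
  exact hw.monotoneOn (subset_infStabilizer hEmeet hg) ha hga

end MinimalExtension

/-- Minimal extension `v_*` of a maxitive map `v` to the set
`E_* = {a | ∀ g ∈ E, g ⊓ a ∈ E}`. -/
theorem exists_minimal_maxitive_extension {Ebar L : Type*} [CompleteLattice Ebar]
    [PartialOrder L]
    (hdist : ∀ x y z : Ebar, x ⊓ (y ⊔ z) = (x ⊓ y) ⊔ (x ⊓ z))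
    (hLlub : ∀ D : Set L, D.Nonempty → DirectedOn (· ≤ ·) D → ∃ d : L, IsLUB D d)
    (E : Set Ebar) (hE : E.Nonempty)
    (hEjoin : ∀ g ∈ E, ∀ g' ∈ E, g ⊔ g' ∈ E) (hEmeet : ∀ g ∈ E, ∀ g' ∈ E, g ⊓ g' ∈ E)
    (v : Ebar → L) (hv : MaxitiveOn E v) :
    ∃ vlow : Ebar → L,
      (∀ a ∈ {a : Ebar | ∀ g ∈ E, g ⊓ a ∈ E},
        IsLUB {x : L | ∃ g ∈ E, g ≤ a ∧ x = v g} (vlow a)) ∧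
      MaxitiveOn {a : Ebar | ∀ g ∈ E, g ⊓ a ∈ E} vlow ∧
      (∀ g ∈ E, vlow g = v g) ∧
      (∀ w : Ebar → L, MaxitiveOn {a : Ebar | ∀ g ∈ E, g ⊓ a ∈ E} w →
        (∀ g ∈ E, w g = v g) →
        ∀ a ∈ {a : Ebar | ∀ g ∈ E, g ⊓ a ∈ E}, vlow a ≤ w a) := by
  have hexists : ∀ a ∈ infStabilizer E, ∃ d, IsLUB (lowerValues E v a) d := fun a ha =>
    hLlub _ (lowerValues_nonempty hE ha) (directedOn_lowerValues hEjoin hv.monotoneOn a)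
  have : Nonempty L := ⟨v hE.some⟩
  choose! vlow hvlow using hexists
  refine ⟨vlow, hvlow, maxitiveOn_infStabilizer_of_isLUB hdist hv hvlow, fun g hg => ?_,
    fun w hw hwv a ha => (hvlow a ha).2 (mem_upperBounds_lowerValues hEmeet hw hwv ha)⟩
  exact (hvlow g (subset_infStabilizer hEmeet hg)).unique (isLUB_lowerValues_self hv.monotoneOn hg)
end

section
/- Let Ē be a complete lattice, E ⊆ Ē a subset, L a poset, a : L → Ē a family, and v : E → L a map such that for every g ∈ E the set T g = {t ∈ L | g ≤ a t} is nonempty, is an upper set, is downward directed, and has v g as its greatest lower bound (IsGLB (T g) (v g)). If the family a is right-continuous, i.e. a t = sInf {a s | s ≫ t} for every t ∈ L (infimum in Ē, ≫ the way-above relation in L), then v is maxitive and {g ∈ E | v g ≤ t} = {g ∈ E | g ≤ a t} for every t ∈ L; in particular v is residuated on Ē/E. -/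
/-!
Write `T g = {t | g ≤ a t}`. Right-continuity gives `v g ≤ t ↔ g ≤ a t`: if `v g = inf (T g) ≤ t`
and `s ≫ t`, the directed set `T g` contains some `z ≤ s`, so `s ∈ T g` as `T g` is an upper set;
hence `g` lies below every `a s` with `s ≫ t`, i.e. below `a t`. This is a Galois-connection-type
adjunction between `v` and `a`, so `v` preserves all existing suprema in `E` and the sublevel sets
of `v` are the principal ideals `↓(a t)`.
-/

/-- `y` is way above `x`. -/
def WayAbove {α : Type*} [Preorder α] (y x : α) : Prop :=
  ∀ D : Set α, D.Nonempty → DirectedOn (· ≥ ·) D → ∀ d : α, IsGLB D d → d ≤ x → ∃ z ∈ D, z ≤ y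

/-- `v` is residuated on `Ē/E`. -/
def ResiduatedOn {Ebar L : Type*} [CompleteLattice Ebar] [Preorder L]
    (E : Set Ebar) (v : Ebar → L) : Prop :=
  ∀ t : L, ∃ a : Ebar, {g ∈ E | v g ≤ t} = {g ∈ E | g ≤ a}

theorem WayAbove.mem_of_isGLB_le {α : Type*} [Preorder α] {s t d : α} {D : Set α}
    (hst : WayAbove s t) (hne : D.Nonempty) (hup : IsUpperSet D) (hdir : DirectedOn (· ≥ ·) D)
    (hglb : IsGLB D d) (hdt : d ≤ t) : s ∈ D := by
  obtain ⟨z, hzD, hzs⟩ := hst D hne hdir d hglb hdt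
  exact hup hzs hzD

section Residuation

variable {Ebar L : Type*} [CompleteLattice Ebar]

theorem le_iff_le_of_isGLB_of_rightContinuous [Preorder L] {a : L → Ebar} {g : Ebar} {u t : L}
    (hne : {t : L | g ≤ a t}.Nonempty) (hup : IsUpperSet {t : L | g ≤ a t})
    (hdir : DirectedOn (· ≥ ·) {t : L | g ≤ a t}) (hglb : IsGLB {t : L | g ≤ a t} u)
    (hrc : sInf {x : Ebar | ∃ s : L, WayAbove s t ∧ x = a s} ≤ a t) :
    u ≤ t ↔ g ≤ a t := by
  refine ⟨fun hut => le_trans ?_ hrc, fun hg => hglb.1 hg⟩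
  refine le_sInf ?_
  rintro _ ⟨s, hst, rfl⟩
  exact hst.mem_of_isGLB_le hne hup hdir hglb hut

variable [Preorder L] {E : Set Ebar} {a : L → Ebar} {v : Ebar → L}

theorem isLUB_image_of_le_iff (h : ∀ g ∈ E, ∀ t, v g ≤ t ↔ g ≤ a t) {S : Set Ebar}
    (hSE : S ⊆ E) (hsup : sSup S ∈ E) : IsLUB (v '' S) (v (sSup S)) := by
  have hsup_le : sSup S ≤ a (v (sSup S)) := (h _ hsup _).1 le_rfl
  refine ⟨?_, fun t ht => (h _ hsup t).2 (sSup_le fun g hg => ?_)⟩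
  · rintro _ ⟨g, hg, rfl⟩
    exact (h g (hSE hg) _).2 ((le_sSup hg).trans hsup_le)
  · exact (h g (hSE hg) t).1 (ht ⟨g, hg, rfl⟩)

theorem maxitiveOn_of_le_iff (h : ∀ g ∈ E, ∀ t, v g ≤ t ↔ g ≤ a t) : MaxitiveOn E v :=
  fun _ hSE _ _ hsup => isLUB_image_of_le_iff h hSE hsup

theorem sep_le_eq_of_le_iff (h : ∀ g ∈ E, ∀ t, v g ≤ t ↔ g ≤ a t) (t : L) :
    {g ∈ E | v g ≤ t} = {g ∈ E | g ≤ a t} :=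
  Set.sep_ext_iff.2 fun g hg => h g hg t

end Residuation

/-- A map represented by a right-continuous family of principal ideals is maxitive and
residuated. -/
theorem maxitive_residuated_of_rightContinuous_principal {Ebar L : Type*}
    [CompleteLattice Ebar] [PartialOrder L]
    (E : Set Ebar) (a : L → Ebar) (v : Ebar → L)
    (hT : ∀ g ∈ E, {t : L | g ≤ a t}.Nonempty ∧ IsUpperSet {t : L | g ≤ a t} ∧
      DirectedOn (· ≥ ·) {t : L | g ≤ a t} ∧ IsGLB {t : L | g ≤ a t} (v g))
    (hrc : ∀ t : L, a t = sInf {x : Ebar | ∃ s : L, WayAbove s t ∧ x = a s}) :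
    MaxitiveOn E v ∧ (∀ t : L, {g ∈ E | v g ≤ t} = {g ∈ E | g ≤ a t}) ∧
      ResiduatedOn E v := by
  have h : ∀ g ∈ E, ∀ t, v g ≤ t ↔ g ≤ a t := fun g hg t =>
    let ⟨hne, hup, hdir, hglb⟩ := hT g hg
    le_iff_le_of_isGLB_of_rightContinuous hne hup hdir hglb (hrc t).ge
  exact ⟨maxitiveOn_of_le_iff h, sep_le_eq_of_le_iff h, fun t => ⟨a t, sep_le_eq_of_le_iff h t⟩⟩
end

section
/- Let E be a poset and L a complete lattice that is dually continuous. If 𝒱 is a nonempty set of maxitive maps E → L that is downward directed for the pointwise order (for all v, w ∈ 𝒱 there is u ∈ 𝒱 with u ≤ v and u ≤ w pointwise), then the pointwise infimum g ↦ ⨅ (v ∈ 𝒱), v g is maxitive. -/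
/-- A poset is dually continuous. -/
def DuallyContinuous (α : Type*) [Preorder α] : Prop :=
  ∀ x : α, {y | WayAbove y x}.Nonempty ∧ DirectedOn (· ≥ ·) {y | WayAbove y x} ∧
    IsGLB {y | WayAbove y x} x

/-- A map `v : E → L` between posets is maxitive. -/
def Maxitive {E L : Type*} [Preorder E] [Preorder L] (v : E → L) : Prop :=
  ∀ S : Set E, S.Nonempty → S.Finite → ∀ b : E, IsLUB S b → IsLUB (v '' S) (v b)

/-!
Each `v ∈ V` is monotone, so `⨅ v ∈ V, v b` bounds the values at `S` from above. For leastness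
it suffices, by dual continuity, to beat every `y ≫ u`, where `u` is an upper bound of the
values at `S`. For each `x ∈ S` the values `v x` form a directed family with infimum `≤ u`, so
some `v x ≤ y`; directedness of `V` merges these finitely many choices into a single `v ∈ V`
with `v '' S ≤ y`, and maxitivity of `v` gives `v b ≤ y`.
-/

theorem Maxitive.monotone {E L : Type*} [Preorder E] [Preorder L] {v : E → L}
    (hv : Maxitive v) : Monotone v := by
  intro x z hxz
  have hlub : IsLUB {x, z} z :=
    ⟨by rintro a (rfl | rfl); exacts [hxz, le_rfl], fun a ha => ha (Set.mem_insert_of_mem x rfl)⟩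
  exact (hv {x, z} (Set.insert_nonempty x {z}) (Set.toFinite _) z hlub).1 ⟨x, by simp, rfl⟩

theorem DirectedOn.exists_mem_lowerBounds_of_finite {α : Type*} [Preorder α] {V : Set α}
    (hV : DirectedOn (· ≥ ·) V) (hne : V.Nonempty) {T : Set α} (hT : T.Finite) (hTV : T ⊆ V) :
    ∃ u ∈ V, u ∈ lowerBounds T := by
  induction T, hT using Set.Finite.induction_on with
  | empty => exact hne.imp fun u hu => ⟨hu, by simp⟩
  | @insert a T _ _ ih =>
    obtain ⟨u, huV, hu⟩ := ih ((Set.subset_insert a T).trans hTV)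
    obtain ⟨w, hwV, hwa, hwu⟩ := hV a (hTV (Set.mem_insert a T)) u huV
    exact ⟨w, hwV, Set.forall_mem_insert.2 ⟨hwa, fun t ht => hwu.trans (hu ht)⟩⟩

theorem WayAbove.exists_apply_le {E L : Type*} [CompleteLattice L] {V : Set (E → L)}
    (hne : V.Nonempty) (hV : DirectedOn (· ≥ ·) V) {x : E} {u y : L} (hy : WayAbove y u)
    (hle : ⨅ v ∈ V, v x ≤ u) : ∃ v ∈ V, v x ≤ y := by
  have hglb : IsGLB ((fun v => v x) '' V) (⨅ v ∈ V, v x) := by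
    rw [← sInf_image]
    exact isGLB_sInf _
  obtain ⟨_, ⟨v, hv, rfl⟩, hvy⟩ :=
    hy _ (hne.image _) (hV.mono_comp fun _ _ h => h x) _ hglb hle
  exact ⟨v, hv, hvy⟩

/-- The pointwise infimum of a nonempty, downward-directed family of maxitive maps into a
dually continuous complete lattice is maxitive. -/
theorem maxitive_pointwise_iInf {E L : Type*} [PartialOrder E] [CompleteLattice L]
    (hL : DuallyContinuous L)
    (V : Set (E → L)) (hne : V.Nonempty) (hmax : ∀ v ∈ V, Maxitive v)
    (hdir : ∀ v ∈ V, ∀ w ∈ V, ∃ u ∈ V, (∀ g : E, u g ≤ v g) ∧ (∀ g : E, u g ≤ w g)) :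
    Maxitive (fun g : E => ⨅ v ∈ V, v g) := by
  have hV : DirectedOn (· ≥ ·) V := hdir
  intro S hSne hSfin b hb
  refine ⟨?_, fun u hu => (hL u).2.2.2 fun y hy => ?_⟩
  · rintro _ ⟨x, hx, rfl⟩
    exact iInf₂_mono fun v hv => (hmax v hv).monotone (hb.1 hx)
  · choose! w hwV hwy using fun x hx => WayAbove.exists_apply_le hne hV hy (hu ⟨x, hx, rfl⟩)
    obtain ⟨v, hvV, hvw⟩ :=
      hV.exists_mem_lowerBounds_of_finite hne (hSfin.image w) (Set.image_subset_iff.2 hwV)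
    have hvS : y ∈ upperBounds (v '' S) := by
      rintro _ ⟨x, hx, rfl⟩
      exact (hvw ⟨x, hx, rfl⟩ x).trans (hwy x hx)
    calc ⨅ v ∈ V, v b ≤ v b := iInf₂_le v hvV
      _ ≤ y := (hmax v hvV S hSne hSfin b hb).2 hvS
end
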